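/- arXiv:1810.10280 — 3 statements merged into one kernel-verified Lean document; each statement's English description precedes it below -/
import Mathlib

section
/- Fix an integer m ≥ 1. For x in C_∞^G(Δ_G^m) set N_∞(x) = ∑_{i=1}^m |log x_i| + sup_n |(1/n) ∑_{k=1}^n Δ^m (log x)_k|. Then N_∞ is a geometric norm on C_∞^G(Δ_G^m): (1) N_∞(x) ≥ 0 for all x in the space; (2) N_∞(x) = 0 if and only if x_k = 1 for every k; (3) N_∞ of the sequence (exp(log a · log x_k)) equals |log a| · N_∞(x) for every positive real a; (4) N_∞ of the pointwise product (x_k · z_k) is at most N_∞(x) + N_∞(z) for all x, z in the space. (Here N_∞(x) = log ‖x‖_∞^G, the logarithm of the geometric norm ‖x‖_∞^G = exp N_∞(x).) -/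
/-!
Everything is read through `y = log x`: the geometric operations become `y + w` and `c • y`,
and `N_∞` becomes the classical norm `∑_{i ≤ m} |y i| + sup_n |(1/n) ∑_{k ≤ n} Δ^m y_k|`, which is
absolutely homogeneous and subadditive because `Δ^m` and the Cesàro means are linear.
For definiteness, vanishing Cesàro means force `Δ^m y_k = 0` for all `k ≥ 1` (difference of
consecutive partial sums), and then `y` vanishes everywhere by induction from its first `m` values,
since `Δ^m y_k = (-1)^m y_{k+m} + (terms in y_k, …, y_{k+m-1})`.
-/

/-- Classical `m`-th order forward difference
`Δ^m y_k = ∑_{v=0}^m (−1)^v C(m,v) y_{k+v}`. -/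
noncomputable def fdiff (m : ℕ) (y : ℕ → ℝ) (k : ℕ) : ℝ :=
  ∑ v ∈ Finset.range (m + 1), (-1 : ℝ) ^ v * (m.choose v : ℝ) * y (k + v)

/-- The Cesàro mean `(1/n) ∑_{k=1}^n Δ^m (log x)_k`. -/
noncomputable def cesaro (m : ℕ) (x : ℕ → ℝ) (n : ℕ) : ℝ :=
  (1 / (n : ℝ)) * ∑ k ∈ Finset.Icc 1 n, fdiff m (fun j => Real.log (x j)) k

/-- Membership in the bigeometric Cesàro difference space `C_p^G(Δ_G^m)`. -/
def memCpG (m : ℕ) (p : ℝ) (x : ℕ → ℝ) : Prop :=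
  (∀ k, 1 ≤ k → 0 < x k) ∧ Summable (fun n : ℕ => |cesaro m x n| ^ p)

/-- Membership in the bigeometric Cesàro difference space `C_∞^G(Δ_G^m)`. -/
def memCinfG (m : ℕ) (x : ℕ → ℝ) : Prop :=
  (∀ k, 1 ≤ k → 0 < x k) ∧ ∃ C : ℝ, ∀ n : ℕ, |cesaro m x n| ≤ C

/-- `N_∞(x) = log ‖x‖_∞^G`, the logarithm of the geometric norm on `C_∞^G(Δ_G^m)`. -/
noncomputable def NinfG (m : ℕ) (x : ℕ → ℝ) : ℝ :=
  (∑ i ∈ Finset.Icc 1 m, |Real.log (x i)|) + ⨆ n : ℕ, |cesaro m x n|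

open Finset Real

section ForwardDifference

variable {m : ℕ}

lemma fdiff_congr {y w : ℕ → ℝ} {k : ℕ} (h : ∀ j, k ≤ j → y j = w j) :
    fdiff m y k = fdiff m w k :=
  sum_congr rfl fun v _ => by rw [h (k + v) (Nat.le_add_right k v)]

lemma fdiff_add (y w : ℕ → ℝ) (k : ℕ) :
    fdiff m (fun j => y j + w j) k = fdiff m y k + fdiff m w k := by
  simp only [fdiff, ← sum_add_distrib, mul_add]

lemma fdiff_const_mul (c : ℝ) (y : ℕ → ℝ) (k : ℕ) :
    fdiff m (fun j => c * y j) k = c * fdiff m y k := by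
  simp only [fdiff, mul_sum]
  exact sum_congr rfl fun v _ => by ring

lemma fdiff_eq_sum_add_top (y : ℕ → ℝ) (k : ℕ) :
    fdiff m y k = ∑ v ∈ range m, (-1 : ℝ) ^ v * (m.choose v : ℝ) * y (k + v)
      + (-1 : ℝ) ^ m * y (k + m) := by
  rw [fdiff, sum_range_succ, Nat.choose_self, Nat.cast_one, mul_one]

lemma eq_zero_of_fdiff_eq_zero {y : ℕ → ℝ} (hinit : ∀ i ∈ Icc 1 m, y i = 0)
    (hfdiff : ∀ k, 1 ≤ k → fdiff m y k = 0) : ∀ k, 1 ≤ k → y k = 0 := by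
  intro k
  induction k using Nat.strong_induction_on with
  | _ k ih =>
    intro hk
    by_cases hkm : k ≤ m
    · exact hinit k (mem_Icc.2 ⟨hk, hkm⟩)
    obtain ⟨j, rfl⟩ : ∃ j, k = j + m := ⟨k - m, by omega⟩
    have hlower : ∑ v ∈ range m, (-1 : ℝ) ^ v * (m.choose v : ℝ) * y (j + v) = 0 :=
      sum_eq_zero fun v hv => by
        rw [ih (j + v) (by simp at hv; omega) (by omega), mul_zero]
    have htop := hfdiff j (by omega)
    rw [fdiff_eq_sum_add_top, hlower, zero_add] at htop
    exact (mul_eq_zero.1 htop).resolve_left (pow_ne_zero _ (by norm_num))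

end ForwardDifference

section Cesaro

variable {m : ℕ} {x z : ℕ → ℝ}

lemma natCast_mul_cesaro (n : ℕ) :
    (n : ℝ) * cesaro m x n = ∑ k ∈ Icc 1 n, fdiff m (fun j => log (x j)) k := by
  rcases Nat.eq_zero_or_pos n with rfl | hn
  · simp
  · rw [cesaro, ← mul_assoc, mul_one_div_cancel (by positivity), one_mul]

lemma fdiff_log_eq_zero_of_cesaro_eq_zero (h : ∀ n, cesaro m x n = 0) :
    ∀ k, 1 ≤ k → fdiff m (fun j => log (x j)) k = 0 := by
  have hpartial : ∀ n, ∑ k ∈ Icc 1 n, fdiff m (fun j => log (x j)) k = 0 := fun n => by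
    rw [← natCast_mul_cesaro, h, mul_zero]
  intro k hk
  obtain ⟨j, rfl⟩ := Nat.exists_eq_add_of_le' hk
  have := hpartial (j + 1)
  rwa [sum_Icc_succ_top (by omega), hpartial j, zero_add] at this

lemma cesaro_mul (hx : ∀ k, 1 ≤ k → 0 < x k) (hz : ∀ k, 1 ≤ k → 0 < z k) (n : ℕ) :
    cesaro m (fun k => x k * z k) n = cesaro m x n + cesaro m z n := by
  simp only [cesaro, ← mul_add, ← sum_add_distrib, ← fdiff_add]
  congr 1
  refine sum_congr rfl fun k hk => fdiff_congr fun j hj => ?_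
  have hj : 1 ≤ j := (mem_Icc.1 hk).1.trans hj
  exact log_mul (hx j hj).ne' (hz j hj).ne'

lemma cesaro_exp_mul_log (c : ℝ) (n : ℕ) :
    cesaro m (fun k => exp (c * log (x k))) n = c * cesaro m x n := by
  simp only [cesaro, log_exp, fdiff_const_mul, ← mul_sum]
  ring

lemma cesaro_eq_zero_of_forall_eq_one (h : ∀ k, 1 ≤ k → x k = 1) (n : ℕ) :
    cesaro m x n = 0 := by
  have hfdiff : ∀ k ∈ Icc 1 n, fdiff m (fun j => log (x j)) k = 0 := fun k hk => by
    rw [fdiff_congr (w := fun _ => 0) fun j hj => by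
      rw [h j ((mem_Icc.1 hk).1.trans hj), log_one]]
    simp [fdiff]
  rw [cesaro, sum_eq_zero hfdiff, mul_zero]

lemma bddAbove_abs_cesaro (hx : memCinfG m x) :
    BddAbove (Set.range fun n => |cesaro m x n|) := by
  obtain ⟨C, hC⟩ := hx.2
  exact ⟨C, Set.forall_mem_range.2 hC⟩

end Cesaro

section Norm

variable {m : ℕ} {x z : ℕ → ℝ}

lemma NinfG_nonneg : 0 ≤ NinfG m x :=
  add_nonneg (sum_nonneg fun _ _ => abs_nonneg _) (Real.iSup_nonneg fun _ => abs_nonneg _)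

lemma NinfG_eq_zero_iff (hx : memCinfG m x) : NinfG m x = 0 ↔ ∀ k, 1 ≤ k → x k = 1 := by
  constructor
  · intro h0
    have hsum_nonneg : 0 ≤ ∑ i ∈ Icc 1 m, |log (x i)| := sum_nonneg fun _ _ => abs_nonneg _
    have hsup_nonneg : 0 ≤ ⨆ n, |cesaro m x n| := Real.iSup_nonneg fun _ => abs_nonneg _
    rw [NinfG] at h0
    have hsum : ∑ i ∈ Icc 1 m, |log (x i)| = 0 := by linarith
    have hsup : ⨆ n, |cesaro m x n| = 0 := by linarith
    have hinit : ∀ i ∈ Icc 1 m, log (x i) = 0 := fun i hi =>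
      abs_eq_zero.1 ((sum_eq_zero_iff_of_nonneg fun _ _ => abs_nonneg _).1 hsum i hi)
    have hcesaro : ∀ n, cesaro m x n = 0 := fun n =>
      abs_nonpos_iff.1 ((le_ciSup (bddAbove_abs_cesaro hx) n).trans hsup.le)
    have hlog := eq_zero_of_fdiff_eq_zero hinit (fdiff_log_eq_zero_of_cesaro_eq_zero hcesaro)
    intro k hk
    exact eq_one_of_pos_of_log_eq_zero (hx.1 k hk) (hlog k hk)
  · intro h1
    have hinit : ∀ i ∈ Icc 1 m, |log (x i)| = 0 := fun i hi => by
      rw [h1 i (mem_Icc.1 hi).1, log_one, abs_zero]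
    simp only [NinfG, sum_eq_zero hinit, cesaro_eq_zero_of_forall_eq_one h1, abs_zero,
      ciSup_const, add_zero]

lemma NinfG_exp_mul_log (c : ℝ) :
    NinfG m (fun k => exp (c * log (x k))) = |c| * NinfG m x := by
  simp only [NinfG, log_exp, abs_mul, cesaro_exp_mul_log, mul_add, mul_sum,
    Real.mul_iSup_of_nonneg (abs_nonneg c)]

lemma NinfG_mul_le (hx : memCinfG m x) (hz : memCinfG m z) :
    NinfG m (fun k => x k * z k) ≤ NinfG m x + NinfG m z := by
  have hinit : ∑ i ∈ Icc 1 m, |log (x i * z i)|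
      ≤ ∑ i ∈ Icc 1 m, |log (x i)| + ∑ i ∈ Icc 1 m, |log (z i)| := by
    rw [← sum_add_distrib]
    refine sum_le_sum fun i hi => ?_
    have hi : 1 ≤ i := (mem_Icc.1 hi).1
    rw [log_mul (hx.1 i hi).ne' (hz.1 i hi).ne']
    exact abs_add_le _ _
  have hsup : ⨆ n, |cesaro m (fun k => x k * z k) n|
      ≤ (⨆ n, |cesaro m x n|) + ⨆ n, |cesaro m z n| := ciSup_le fun n =>
    calc |cesaro m (fun k => x k * z k) n|
        = |cesaro m x n + cesaro m z n| := by rw [cesaro_mul hx.1 hz.1]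
      _ ≤ |cesaro m x n| + |cesaro m z n| := abs_add_le _ _
      _ ≤ _ := add_le_add (le_ciSup (bddAbove_abs_cesaro hx) n)
          (le_ciSup (bddAbove_abs_cesaro hz) n)
  rw [NinfG, NinfG, NinfG]
  linarith

end Norm

theorem NinfG_is_norm_general (m : ℕ) :
    (∀ x : ℕ → ℝ, memCinfG m x → 0 ≤ NinfG m x) ∧
    (∀ x : ℕ → ℝ, memCinfG m x →
      (NinfG m x = 0 ↔ ∀ k, 1 ≤ k → x k = 1)) ∧
    (∀ x : ℕ → ℝ, memCinfG m x → ∀ a : ℝ, 0 < a →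
      NinfG m (fun k => Real.exp (Real.log a * Real.log (x k))) =
        |Real.log a| * NinfG m x) ∧
    (∀ x z : ℕ → ℝ, memCinfG m x → memCinfG m z →
      NinfG m (fun k => x k * z k) ≤ NinfG m x + NinfG m z) :=
  ⟨fun _ _ => NinfG_nonneg,
    fun _ hx => NinfG_eq_zero_iff hx,
    fun _ _ a _ => NinfG_exp_mul_log (log a),
    fun _ _ hx hz => NinfG_mul_le hx hz⟩

/-- `N_∞` is a (geometric) norm on `C_∞^G(Δ_G^m)`. -/
theorem NinfG_is_norm (m : ℕ) (hm : 1 ≤ m) :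
    (∀ x : ℕ → ℝ, memCinfG m x → 0 ≤ NinfG m x) ∧
    (∀ x : ℕ → ℝ, memCinfG m x →
      (NinfG m x = 0 ↔ ∀ k, 1 ≤ k → x k = 1)) ∧
    (∀ x : ℕ → ℝ, memCinfG m x → ∀ a : ℝ, 0 < a →
      NinfG m (fun k => Real.exp (Real.log a * Real.log (x k))) =
        |Real.log a| * NinfG m x) ∧
    (∀ x z : ℕ → ℝ, memCinfG m x → memCinfG m z →
      NinfG m (fun k => x k * z k) ≤ NinfG m x + NinfG m z) :=
  NinfG_is_norm_general m
end

section
/- Fix an integer m ≥ 1. If x is a sequence of positive reals belonging to C_∞^G(Δ_G^m) with x_1 = x_2 = ⋯ = x_m = 1, then the sequence k ↦ (1/k^m) · |log x_k| is bounded. (In geometric notation: sup_k e^{k^{-m}} ⊙ |x_k|_G < ∞.) -/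
/-!
Write `y = log x`. A bound `|∑_{k ≤ n} Δ g_k| ≤ C n^j` on partial sums of differences gives
`|g_k| ≤ C' k^j`, since the sum telescopes to `g_{n+1} - g_1`; and a pointwise bound
`|g_k| ≤ C k^j` gives `|∑_{k ≤ n} g_k| ≤ C n^{j+1}`. Boundedness of the Cesàro means says
`|∑_{k ≤ n} Δ^m y_k| ≤ C n`, and alternating the two steps `m` times, down from `Δ^{m-1} y`
to `y`, gives `|y_k| ≤ C' k^m`.
-/

open Finset

lemma fdiff_eq_neg_one_pow_mul_fwdDiff_iter (m : ℕ) (y : ℕ → ℝ) (k : ℕ) :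
    fdiff m y k = (-1) ^ m * (fwdDiff 1)^[m] y k := by
  rw [fwdDiff_iter_eq_sum_shift, mul_sum, fdiff]
  refine sum_congr rfl fun v hv => ?_
  have hvm : v ≤ m := Nat.lt_succ_iff.mp (mem_range.mp hv)
  have hsign : (-1 : ℝ) ^ m * (-1) ^ (m - v) = (-1) ^ v := by
    rw [← pow_add, show m + (m - v) = 2 * (m - v) + v by omega, pow_add, pow_mul]
    simp
  simp only [zsmul_eq_mul, smul_eq_mul, mul_one, Int.cast_mul, Int.cast_pow, Int.cast_neg,
    Int.cast_one, Int.cast_natCast]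
  rw [← mul_assoc, ← mul_assoc, hsign]

lemma sum_Icc_fwdDiff (f : ℕ → ℝ) (n : ℕ) :
    ∑ k ∈ Icc 1 n, fwdDiff 1 f k = f (n + 1) - f 1 := by
  induction n with
  | zero => simp
  | succ n ih =>
    rw [sum_Icc_succ_top (by omega), ih, fwdDiff]
    ring

lemma sum_Icc_fdiff_eq_mul_cesaro (m : ℕ) (x : ℕ → ℝ) (n : ℕ) :
    ∑ k ∈ Icc 1 n, fdiff m (fun j => Real.log (x j)) k = n * cesaro m x n := by
  rcases n.eq_zero_or_pos with rfl | hn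
  · simp
  · rw [cesaro, ← mul_assoc, mul_one_div_cancel (by positivity), one_mul]

lemma abs_sum_Icc_le_of_abs_le_pow {g : ℕ → ℝ} {C : ℝ} {j : ℕ}
    (hg : ∀ k, 1 ≤ k → |g k| ≤ C * (k : ℝ) ^ j) (n : ℕ) :
    |∑ k ∈ Icc 1 n, g k| ≤ C * (n : ℝ) ^ (j + 1) := by
  rcases n.eq_zero_or_pos with rfl | hn
  · simp
  have hC : 0 ≤ C := by simpa using (abs_nonneg _).trans (hg 1 le_rfl)
  calc |∑ k ∈ Icc 1 n, g k|
      ≤ ∑ k ∈ Icc 1 n, |g k| := abs_sum_le_sum_abs _ _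
    _ ≤ ∑ _k ∈ Icc 1 n, C * (n : ℝ) ^ j := by
        refine sum_le_sum fun k hk => ?_
        obtain ⟨hk1, hkn⟩ := mem_Icc.mp hk
        exact (hg k hk1).trans (by gcongr)
    _ = C * (n : ℝ) ^ (j + 1) := by
        rw [sum_const, Nat.card_Icc, nsmul_eq_mul, Nat.add_sub_cancel]
        ring

lemma exists_abs_le_pow_of_abs_sum_fwdDiff_le {f : ℕ → ℝ} {C : ℝ} {j : ℕ}
    (hf : ∀ n, |∑ k ∈ Icc 1 n, fwdDiff 1 f k| ≤ C * (n : ℝ) ^ j) :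
    ∃ D, ∀ k, 1 ≤ k → |f k| ≤ D * (k : ℝ) ^ j := by
  have hC : 0 ≤ C := by simpa using (abs_nonneg _).trans (hf 1)
  refine ⟨|f 1| + C, fun k hk => ?_⟩
  obtain ⟨n, rfl⟩ : ∃ n, k = n + 1 := ⟨k - 1, by omega⟩
  have hn : (n : ℝ) ^ j ≤ ((n + 1 : ℕ) : ℝ) ^ j := by gcongr; omega
  have hone : (1 : ℝ) ≤ ((n + 1 : ℕ) : ℝ) ^ j := one_le_pow₀ (by simp)
  calc |f (n + 1)| = |f 1 + ∑ k ∈ Icc 1 n, fwdDiff 1 f k| := by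
        rw [sum_Icc_fwdDiff, add_sub_cancel]
    _ ≤ |f 1| + C * (n : ℝ) ^ j := (abs_add_le _ _).trans (by gcongr; exact hf n)
    _ ≤ (|f 1| + C) * ((n + 1 : ℕ) : ℝ) ^ j := by
        nlinarith [abs_nonneg (f 1), mul_le_mul_of_nonneg_left hn hC]

lemma exists_abs_le_pow_of_abs_sum_fwdDiff_iter_le {C : ℝ} (i : ℕ) :
    ∀ {f : ℕ → ℝ}, (∀ n, |∑ k ∈ Icc 1 n, (fwdDiff 1)^[i + 1] f k| ≤ C * n) →
      ∃ D, ∀ k, 1 ≤ k → |f k| ≤ D * (k : ℝ) ^ (i + 1) := by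
  induction i with
  | zero => exact fun hf => exists_abs_le_pow_of_abs_sum_fwdDiff_le (by simpa using hf)
  | succ i ih =>
    intro f hf
    rw [Function.iterate_succ_apply] at hf
    obtain ⟨D, hD⟩ := ih hf
    exact exists_abs_le_pow_of_abs_sum_fwdDiff_le (abs_sum_Icc_le_of_abs_le_pow hD)

theorem upsilonCinfG_growth_bound_general (m : ℕ) (hm : 1 ≤ m) (x : ℕ → ℝ)
    (hx : memCinfG m x) :
    ∃ C : ℝ, ∀ k : ℕ, (1 / (k : ℝ) ^ m) * |Real.log (x k)| ≤ C := by
  obtain ⟨-, C, hC⟩ := hx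
  obtain ⟨i, rfl⟩ : ∃ i, m = i + 1 := ⟨m - 1, by omega⟩
  have hsum : ∀ n, |∑ k ∈ Icc 1 n, (fwdDiff 1)^[i + 1] (fun j => Real.log (x j)) k|
      ≤ C * n := by
    intro n
    have h := sum_Icc_fdiff_eq_mul_cesaro (i + 1) x n
    simp only [fdiff_eq_neg_one_pow_mul_fwdDiff_iter, ← mul_sum] at h
    calc _ = |(-1 : ℝ) ^ (i + 1) * ∑ k ∈ Icc 1 n,
            (fwdDiff 1)^[i + 1] (fun j => Real.log (x j)) k| := by simp [abs_mul]
      _ = n * |cesaro (i + 1) x n| := by rw [h, abs_mul, Nat.abs_cast]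
      _ ≤ C * n := by rw [mul_comm]; gcongr; exact hC n
  obtain ⟨D, hD⟩ := exists_abs_le_pow_of_abs_sum_fwdDiff_iter_le i hsum
  refine ⟨D, fun k => ?_⟩
  rcases k.eq_zero_or_pos with rfl | hk
  · simpa using (abs_nonneg _).trans (hD 1 le_rfl)
  · rw [one_div_mul_eq_div, div_le_iff₀ (by positivity)]
    exact hD k hk

/-- if `x ∈ υC_∞^G(Δ_G^m)` (i.e. `x ∈ C_∞^G(Δ_G^m)` with
`x_1 = ⋯ = x_m = 1`), then `sup_k e^{k^{-m}} ⊙ |x_k|_G < ∞`, i.e.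
the sequence `k ↦ (1/k^m)·|log x_k|` is bounded. -/
theorem upsilonCinfG_growth_bound (m : ℕ) (hm : 1 ≤ m) (x : ℕ → ℝ)
    (hx : memCinfG m x) (hone : ∀ i, 1 ≤ i → i ≤ m → x i = 1) :
    ∃ C : ℝ, ∀ k : ℕ, (1 / (k : ℝ) ^ m) * |Real.log (x k)| ≤ C :=
  upsilonCinfG_growth_bound_general m hm x hx
end

section
/- Fix an integer m ≥ 1 and a real p with 1 ≤ p < ∞. Let α_{nk} (n, k ≥ 1) be a doubly indexed family of reals (α_{nk} = log a_{nk} for an infinite matrix A of geometric real numbers), and define b_{ik} = (1/i) · (Δ^{m-1}α_{1k} − Δ^{m-1}α_{(i+1)k}), where Δ^{m-1} acts on the row index: Δ^{m-1}α_{nk} = ∑_{v=0}^{m-1} (−1)^v · binom(m-1,v) · α_{(n+v)k}. Then the following are equivalent: (I) for every bounded real sequence t, the series A_n(t) = ∑_{k=1}^∞ α_{nk} t_k converges for each n and ∑_{i=1}^∞ |(1/i) ∑_{n=1}^i Δ^m A_n(t)|^p < ∞; (II) (i) ∑_{k=1}^∞ |α_{nk}| < ∞ for each n, and (ii) for every bounded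 real sequence t, the series B_i(t) = ∑_{k=1}^∞ b_{ik} t_k converges for each i and ∑_{i=1}^∞ |B_i(t)|^p < ∞. (In the paper's notation: A ∈ (ℓ_∞^G, C_p^G(Δ_G^m)) if and only if the rows of A are in ℓ_1^G and B ∈ (ℓ_∞^G, ℓ_p^G).) -/
/-- The associated matrix
`b_{ik} = (1/i)·(Δ^{m-1}α_{1k} − Δ^{m-1}α_{(i+1)k})`, where `Δ^{m-1}` acts on
the row index. -/
noncomputable def bmat (m : ℕ) (α : ℕ → ℕ → ℝ) (i k : ℕ) : ℝ :=
  (1 / (i : ℝ)) *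
    (fdiff (m - 1) (fun n => α n k) 1 - fdiff (m - 1) (fun n => α n k) (i + 1))

/-! Since `Δ^(M+1) y_n = Δ^M y_n − Δ^M y_(n+1)`, the Cesàro mean
`(1/i) ∑_{n ≤ i} Δ^m A_n(t)` telescopes to `(1/i) (Δ^(m-1) A_1(t) − Δ^(m-1) A_(i+1)(t))`,
which by linearity of the row series is `B_i(t)`. Hence both sides impose the same `ℓ_p`
condition as soon as every row of `A` converges against every bounded `t`, and that happens
iff every row is absolutely summable (test it against the signs of the row). -/

open Finset

lemma fdiff_succ (M : ℕ) (y : ℕ → ℝ) (k : ℕ) :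
    fdiff (M + 1) y k = fdiff M y k - fdiff M y (k + 1) := by
  have pascal := sum_choose_succ_mul (fun v _ => (-1 : ℝ) ^ v * y (k + v)) M
  simp only [fdiff, ← sum_sub_distrib, ← sum_add_distrib] at pascal ⊢
  convert pascal using 1
  · exact sum_congr rfl fun v _ => by ring
  · exact sum_congr rfl fun v _ => by rw [show k + 1 + v = k + (v + 1) by omega]; ring

lemma sum_Icc_fdiff_succ (M : ℕ) (y : ℕ → ℝ) (i : ℕ) :
    ∑ n ∈ Icc 1 i, fdiff (M + 1) y n = fdiff M y 1 - fdiff M y (i + 1) := by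
  induction i with
  | zero => simp
  | succ i ih => rw [sum_Icc_succ_top (by omega), ih, fdiff_succ]; ring

lemma fdiff_mul_const (M : ℕ) (y : ℕ → ℝ) (c : ℝ) (n : ℕ) :
    fdiff M y n * c = fdiff M (fun j => y j * c) n := by
  simp only [fdiff, sum_mul, mul_assoc]

lemma hasSum_fdiff {ι : Type*} {f : ℕ → ι → ℝ} {a : ℕ → ℝ} (M n : ℕ)
    (h : ∀ v, HasSum (f (n + v)) (a (n + v))) :
    HasSum (fun k => fdiff M (fun j => f j k) n) (fdiff M a n) :=
  hasSum_sum fun v _ => (h v).mul_left _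

lemma hasSum_bmat_mul (M : ℕ) (a : ℕ → ℕ → ℝ) (t : ℕ → ℝ)
    (ha : ∀ j, 1 ≤ j → Summable fun k => a j k * t k) (i : ℕ) :
    HasSum (fun k => bmat (M + 1) a i k * t k)
      ((1 / (i : ℝ)) * ∑ n ∈ Icc 1 i, fdiff (M + 1) (fun j => ∑' k, a j k * t k) n) := by
  have row : ∀ n, 1 ≤ n → HasSum (fun k => fdiff M (fun j => a j k * t k) n)
      (fdiff M (fun j => ∑' k, a j k * t k) n) :=
    fun n hn => hasSum_fdiff M n fun v => (ha (n + v) (by omega)).hasSum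
  have hb : (fun k => bmat (M + 1) a i k * t k) = fun k => (1 / (i : ℝ)) *
      (fdiff M (fun j => a j k * t k) 1 - fdiff M (fun j => a j k * t k) (i + 1)) := by
    ext k
    rw [bmat, Nat.add_sub_cancel, mul_assoc, sub_mul, fdiff_mul_const, fdiff_mul_const]
  rw [hb, sum_Icc_fdiff_succ]
  exact ((row 1 le_rfl).sub (row (i + 1) (by omega))).mul_left _

lemma summable_abs_iff_forall_summable_mul (a : ℕ → ℝ) :
    Summable (fun k => |a k|) ↔
      ∀ t : ℕ → ℝ, (∃ C : ℝ, ∀ k, |t k| ≤ C) → Summable fun k => a k * t k := by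
  refine ⟨fun ha t ⟨C, hC⟩ => ?_, fun h => ?_⟩
  · refine Summable.of_norm_bounded (ha.mul_right C) fun k => ?_
    rw [Real.norm_eq_abs, abs_mul]
    exact mul_le_mul_of_nonneg_left (hC k) (abs_nonneg _)
  · refine (h (fun k => SignType.sign (a k)) ⟨1, fun k => ?_⟩).congr fun k => self_mul_sign _
    rcases lt_trichotomy (a k) 0 with hk | hk | hk <;> simp [hk]

theorem matrix_linf_to_CpG_general (m : ℕ) (hm : 1 ≤ m) (p : ℝ)
    (α : ℕ → ℕ → ℝ) :
    (∀ t : ℕ → ℝ, (∃ C : ℝ, ∀ k, |t k| ≤ C) →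
        (∀ n, 1 ≤ n → Summable (fun k : ℕ => α n (k + 1) * t (k + 1))) ∧
        Summable (fun i : ℕ =>
          |(1 / (i : ℝ)) * ∑ n ∈ Finset.Icc 1 i,
              fdiff m (fun j => ∑' k : ℕ, α j (k + 1) * t (k + 1)) n| ^ p)) ↔
      ((∀ n, 1 ≤ n → Summable (fun k : ℕ => |α n (k + 1)|)) ∧
        ∀ t : ℕ → ℝ, (∃ C : ℝ, ∀ k, |t k| ≤ C) →
          (∀ i, 1 ≤ i → Summable (fun k : ℕ => bmat m α i (k + 1) * t (k + 1))) ∧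
          Summable (fun i : ℕ =>
            |∑' k : ℕ, bmat m α (i + 1) (k + 1) * t (k + 1)| ^ p)) := by
  obtain ⟨M, rfl⟩ := Nat.exists_eq_add_of_le' hm
  have cesaro (t : ℕ → ℝ) (hA : ∀ n, 1 ≤ n → Summable fun k => α n (k + 1) * t (k + 1))
      (i : ℕ) : HasSum (fun k => bmat (M + 1) α i (k + 1) * t (k + 1)) ((1 / (i : ℝ)) *
        ∑ n ∈ Icc 1 i, fdiff (M + 1) (fun j => ∑' k, α j (k + 1) * t (k + 1)) n) :=
    hasSum_bmat_mul M (fun j k => α j (k + 1)) (fun k => t (k + 1)) hA i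
  have shift (t : ℕ → ℝ) :
      (Summable fun i => |∑' k, bmat (M + 1) α (i + 1) (k + 1) * t (k + 1)| ^ p) ↔
        Summable fun i => |∑' k, bmat (M + 1) α i (k + 1) * t (k + 1)| ^ p :=
    summable_nat_add_iff (f := fun i => |∑' k, bmat (M + 1) α i (k + 1) * t (k + 1)| ^ p) 1
  constructor
  · intro H
    refine ⟨fun n hn => (summable_abs_iff_forall_summable_mul _).2 fun t ⟨C, hC⟩ => ?_,
      fun t ht => ?_⟩
    · simpa using (H (fun k => t (k - 1)) ⟨C, fun k => hC (k - 1)⟩).1 n hn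
    obtain ⟨hA, hS⟩ := H t ht
    refine ⟨fun i _ => (cesaro t hA i).summable, (shift t).2 ?_⟩
    simpa only [(cesaro t hA _).tsum_eq] using hS
  · rintro ⟨hrow, hB⟩ t ⟨C, hC⟩
    have hA n (hn : 1 ≤ n) : Summable fun k => α n (k + 1) * t (k + 1) :=
      (summable_abs_iff_forall_summable_mul _).1 (hrow n hn) _ ⟨C, fun k => hC (k + 1)⟩
    refine ⟨hA, ?_⟩
    simpa only [(cesaro t hA _).tsum_eq] using (shift t).1 (hB t ⟨C, hC⟩).2

/-- `A ∈ (ℓ_∞^G, C_p^G(Δ_G^m))` iff the rows of `A` are in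
`ℓ_1^G` and `B ∈ (ℓ_∞^G, ℓ_p^G)`, stated after taking logarithms
(`α_{nk} = log a_{nk}`, `t_k = log x_k`). -/
theorem matrix_linf_to_CpG (m : ℕ) (hm : 1 ≤ m) (p : ℝ) (hp : 1 ≤ p)
    (α : ℕ → ℕ → ℝ) :
    (∀ t : ℕ → ℝ, (∃ C : ℝ, ∀ k, |t k| ≤ C) →
        (∀ n, 1 ≤ n → Summable (fun k : ℕ => α n (k + 1) * t (k + 1))) ∧
        Summable (fun i : ℕ =>
          |(1 / (i : ℝ)) * ∑ n ∈ Finset.Icc 1 i,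
              fdiff m (fun j => ∑' k : ℕ, α j (k + 1) * t (k + 1)) n| ^ p)) ↔
      ((∀ n, 1 ≤ n → Summable (fun k : ℕ => |α n (k + 1)|)) ∧
        ∀ t : ℕ → ℝ, (∃ C : ℝ, ∀ k, |t k| ≤ C) →
          (∀ i, 1 ≤ i → Summable (fun k : ℕ => bmat m α i (k + 1) * t (k + 1))) ∧
          Summable (fun i : ℕ =>
            |∑' k : ℕ, bmat m α (i + 1) (k + 1) * t (k + 1)| ^ p)) :=
  matrix_linf_to_CpG_general m hm p α
end
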